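/- arXiv:2311.17254 — 6 statements merged into one kernel-verified Lean document; each statement's English description precedes it below -/
import Mathlib

section
/- Validity of the integer L-shaped cut: with a = max( V̂* − V̂1, (V̂* − V̂0)/2 ), for every commitment y : G × T → {0,1} one has V̂(y) ≥ V̂* + a · ( ∑_{t∈T} ( ∑_{g∈I_{1t}} y_{gt} − ∑_{g∈I_{0t}} y_{gt} − |I_{1t}| ) ); equivalently, V̂(y) ≥ V̂* − a · d(y, y*), where d(y, y*) = ∑_{t∈T} ( ∑_{g∈I_{1t}} (1 − y_{gt}) + ∑_{g∈I_{0t}} y_{gt} ) is the Hamming distance between y and y*. -/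
open Finset

/-- Indicator of a boolean commitment value as a real number. -/
def ind (b : Bool) : ℝ := if b then 1 else 0

/-- Hamming distance between two commitments,
`d(y, y*) = ∑_t ( ∑_{g ∈ I₁ₜ} (1 − y_{gt}) + ∑_{g ∈ I₀ₜ} y_{gt} )`. -/
noncomputable def hamming {G T : Type*} [Fintype G] [Fintype T]
    (ystar y : G → T → Bool) : ℝ :=
  ∑ t : T,
    ((∑ g ∈ univ.filter (fun g => ystar g t = true), (1 - ind (y g t))) +
     (∑ g ∈ univ.filter (fun g => ystar g t = false), ind (y g t)))


noncomputable def hamN {G T : Type*} [Fintype G] [Fintype T]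
    (ystar y : G → T → Bool) : ℕ :=
  ∑ t : T, (univ.filter (fun g => ¬ (y g t = ystar g t))).card

lemma hamming_eq_hamN {G T : Type*} [Fintype G] [Fintype T]
    (ystar y : G → T → Bool) :
    hamming ystar y = (hamN ystar y : ℝ) := by
  unfold hamming hamN
  push_cast
  refine Finset.sum_congr rfl fun t _ => ?_
  rw [← Finset.sum_boole, Finset.sum_filter, Finset.sum_filter, ← Finset.sum_add_distrib]
  refine Finset.sum_congr rfl fun g _ => ?_
  cases h1 : ystar g t <;> cases h2 : y g t <;> simp [ind, h1, h2]

lemma hamN_eq_zero {G T : Type*} [Fintype G] [Fintype T]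
    {ystar y : G → T → Bool} (h : hamN ystar y = 0) : y = ystar := by
  funext g t
  unfold hamN at h
  rw [Finset.sum_eq_zero_iff] at h
  have := h t (Finset.mem_univ t)
  rw [Finset.card_eq_zero, Finset.filter_eq_empty_iff] at this
  have := this (Finset.mem_univ g)
  simpa using this

lemma expr_eq_neg_hamming {G T : Type*} [Fintype G] [Fintype T]
    (ystar y : G → T → Bool) :
    (∑ t : T,
        ((∑ g ∈ univ.filter (fun g => ystar g t = true), ind (y g t)) -
         (∑ g ∈ univ.filter (fun g => ystar g t = false), ind (y g t)) -
         ((univ.filter (fun g => ystar g t = true)).card : ℝ)))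
      = - hamming ystar y := by
  unfold hamming
  rw [← Finset.sum_neg_distrib]
  refine Finset.sum_congr rfl fun t _ => ?_
  rw [Finset.sum_sub_distrib, Finset.sum_const, nsmul_eq_mul, mul_one]
  ring

/-- Validity of the integer L-shaped cut: with
`a = max(V̂* − V̂₁, (V̂* − V̂₀)/2)`, every commitment `y` satisfies
`V̂(y) ≥ V̂* + a · (∑_t (∑_{g∈I₁ₜ} y_{gt} − ∑_{g∈I₀ₜ} y_{gt} − |I₁ₜ|))`,
equivalently `V̂(y) ≥ V̂* − a · d(y, y*)`. -/
theorem integer_L_shaped_cut_valid {G T : Type*} [Fintype G] [Fintype T]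
    (Vhat : (G → T → Bool) → ℝ) (ystar : G → T → Bool)
    (V0 V1 : ℝ)
    (hV0 : ∀ y : G → T → Bool, V0 ≤ Vhat y)
    (hV1 : ∀ y : G → T → Bool, hamming ystar y = 1 → V1 ≤ Vhat y) :
    ∀ y : G → T → Bool,
      Vhat y ≥ Vhat ystar +
        max (Vhat ystar - V1) ((Vhat ystar - V0) / 2) *
          (∑ t : T,
            ((∑ g ∈ univ.filter (fun g => ystar g t = true), ind (y g t)) -
             (∑ g ∈ univ.filter (fun g => ystar g t = false), ind (y g t)) -
             ((univ.filter (fun g => ystar g t = true)).card : ℝ))) ∧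
      Vhat y ≥ Vhat ystar -
        max (Vhat ystar - V1) ((Vhat ystar - V0) / 2) * hamming ystar y := by

  intro y
  set a := max (Vhat ystar - V1) ((Vhat ystar - V0) / 2) with ha
  have key : Vhat y ≥ Vhat ystar - a * hamming ystar y := by
    have hVs : V0 ≤ Vhat ystar := hV0 ystar
    have ha2 : Vhat ystar - V0 ≤ 2 * a := by
      have := le_max_right (Vhat ystar - V1) ((Vhat ystar - V0) / 2)
      linarith
    have ha1 : Vhat ystar - V1 ≤ a := le_max_left _ _
    have hanneg : 0 ≤ a := by
      have := le_max_right (Vhat ystar - V1) ((Vhat ystar - V0) / 2)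
      linarith
    rw [hamming_eq_hamN]
    rcases Nat.lt_or_ge (hamN ystar y) 2 with h2 | h2
    · interval_cases h : hamN ystar y
      · have := hamN_eq_zero h
        subst this
        simp
      · have h1 : hamming ystar y = 1 := by rw [hamming_eq_hamN, h]; norm_num
        have := hV1 y h1
        push_cast
        linarith
    · have hn : (2 : ℝ) ≤ (hamN ystar y : ℝ) := by exact_mod_cast h2
      have := hV0 y
      nlinarith
  constructor
  · rw [expr_eq_neg_hamming]
    linarith [key]
  · exact key
end

section
/- The LBBD cut dominates the no-good cut: for every commitment y : G × T → {0,1}, ∑_{t∈T} V̂*_t · (1 − ∑_{g∈I_{0t}} y_{gt}) ≥ V̂* · (1 − ∑_{t∈T} ( ∑_{g∈I_{1t}} (1 − y_{gt}) + ∑_{g∈I_{0t}} y_{gt} )); moreover, the inequality is strict for any y such that V̂* > 0, ∑_{t∈T} ∑_{g∈I_{0t}} y_{gt} = 0, and ∑_{t∈T} ∑_{g∈I_{1t}} (1 − y_{gt}) ≥ 1 (i.e., no originally-off generator is turned on but at least one originally-on generator is turned off). -/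
open Finset

lemma ind_nonneg (b : Bool) : 0 ≤ ind b := by
  unfold ind; split <;> norm_num

lemma ind_le_one (b : Bool) : ind b ≤ 1 := by
  unfold ind; split <;> norm_num

/-- The LBBD cut dominates the no-good cut:
`∑_t V̂*_t (1 − ∑_{g∈I₀ₜ} y_{gt}) ≥ V̂* (1 − ∑_t (∑_{g∈I₁ₜ}(1 − y_{gt}) + ∑_{g∈I₀ₜ} y_{gt}))`,
with strict inequality whenever `V̂* > 0`, no originally-off generator is turned on,
and at least one originally-on generator is turned off. -/
theorem lbbd_dominates_no_good {G T : Type*} [Fintype G] [Fintype T]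
    (ystar : G → T → Bool) (Vt : T → ℝ) (hVt : ∀ t, 0 ≤ Vt t) :
    ∀ y : G → T → Bool,
      (∑ t : T, Vt t *
          (1 - ∑ g ∈ univ.filter (fun g => ystar g t = false), ind (y g t))) ≥
        (∑ t : T, Vt t) *
          (1 - ∑ t : T,
            ((∑ g ∈ univ.filter (fun g => ystar g t = true), (1 - ind (y g t))) +
             (∑ g ∈ univ.filter (fun g => ystar g t = false), ind (y g t)))) ∧
      ((0 < ∑ t : T, Vt t) ∧
       (∑ t : T, ∑ g ∈ univ.filter (fun g => ystar g t = false), ind (y g t)) = 0 ∧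
       1 ≤ ∑ t : T, ∑ g ∈ univ.filter (fun g => ystar g t = true), (1 - ind (y g t)) →
        (∑ t : T, Vt t *
            (1 - ∑ g ∈ univ.filter (fun g => ystar g t = false), ind (y g t))) >
          (∑ t : T, Vt t) *
            (1 - ∑ t : T,
              ((∑ g ∈ univ.filter (fun g => ystar g t = true), (1 - ind (y g t))) +
               (∑ g ∈ univ.filter (fun g => ystar g t = false), ind (y g t))))) := by
  intro y
  set A : T → ℝ := fun t => ∑ g ∈ univ.filter (fun g => ystar g t = true), (1 - ind (y g t)) with hAdef
  set B : T → ℝ := fun t => ∑ g ∈ univ.filter (fun g => ystar g t = false), ind (y g t) with hBdef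
  set V : ℝ := ∑ t : T, Vt t with hVdef
  have hA : ∀ t, 0 ≤ A t := fun t =>
    Finset.sum_nonneg fun g _ => by linarith [ind_le_one (y g t)]
  have hB : ∀ t, 0 ≤ B t := fun t =>
    Finset.sum_nonneg fun g _ => ind_nonneg (y g t)
  have hVnn : 0 ≤ V := Finset.sum_nonneg fun t _ => hVt t
  have hVtle : ∀ t, Vt t ≤ V := fun t =>
    Finset.single_le_sum (fun t _ => hVt t) (mem_univ t)
  have hsplit : ∑ t : T, (A t + B t) = (∑ t : T, A t) + (∑ t : T, B t) :=
    Finset.sum_add_distrib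
  have e1 : ∑ t : T, Vt t * (1 - B t) = V - ∑ t : T, Vt t * B t := by
    rw [hVdef, ← Finset.sum_sub_distrib]
    exact Finset.sum_congr rfl fun t _ => by ring
  have key : ∑ t : T, Vt t * B t ≤ V * ∑ t : T, B t := by
    rw [Finset.mul_sum]
    exact Finset.sum_le_sum fun t _ => mul_le_mul_of_nonneg_right (hVtle t) (hB t)
  have hAsum : 0 ≤ ∑ t : T, A t := Finset.sum_nonneg fun t _ => hA t
  constructor
  · rw [e1, hsplit]
    have : 0 ≤ V * ∑ t : T, A t := mul_nonneg hVnn hAsum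
    nlinarith
  · rintro ⟨hVpos, hB0, hA1⟩
    have hBt0 : ∀ t, B t = 0 := by
      intro t
      have := (Finset.sum_eq_zero_iff_of_nonneg (fun t _ => hB t)).mp hB0 t (mem_univ t)
      exact this
    have eL : ∑ t : T, Vt t * (1 - B t) = V := by
      rw [e1]
      have : ∑ t : T, Vt t * B t = 0 :=
        Finset.sum_eq_zero fun t _ => by rw [hBt0 t, mul_zero]
      rw [this]; ring
    rw [eL, hsplit]
    have hBsum : ∑ t : T, B t = 0 := Finset.sum_eq_zero fun t _ => hBt0 t
    rw [hBsum]
    nlinarith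
end

section
/- Decommitting generators cannot decrease the uncongested market-clearing price: if ∑_{g∈S} Pmin_g < D and S' ⊆ S ⊆ G, then 0 ≤ λ_C(S, D) ≤ λ_C(S', D) ≤ C. -/
open Finset

/-- Available supply of the committed set `S` at price `p`:
generators with marginal cost `≤ p` produce at their maximum,
all others at their minimum. -/
noncomputable def supply {G : Type*} (c Pmin Pmax : G → ℝ) (S : Finset G) (p : ℝ) : ℝ :=
  (∑ g ∈ S.filter (fun g => c g ≤ p), Pmax g) +
  (∑ g ∈ S.filter (fun g => ¬ c g ≤ p), Pmin g)

/-- Uncongested market-clearing price for the committed set `S` and demand `D`,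
with price cap (value of lost load) `C`. -/
noncomputable def clearingPrice {G : Type*} (c Pmin Pmax : G → ℝ) (C : ℝ)
    (S : Finset G) (D : ℝ) : ℝ :=
  if D ≤ ∑ g ∈ S, Pmax g then sInf {p : ℝ | D ≤ supply c Pmin Pmax S p} else C

lemma supply_at_cap {G : Type*} (c Pmin Pmax : G → ℝ) (C : ℝ)
    (hcC : ∀ g, c g ≤ C) (S : Finset G) :
    supply c Pmin Pmax S C = ∑ g ∈ S, Pmax g := by
  unfold supply
  rw [Finset.filter_true_of_mem (fun g _ => hcC g),
      Finset.filter_false_of_mem (fun g _ => not_not_intro (hcC g)),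
      Finset.sum_empty, add_zero]

lemma supply_neg {G : Type*} (c Pmin Pmax : G → ℝ)
    (hc0 : ∀ g, 0 ≤ c g) (S : Finset G) (p : ℝ) (hp : p < 0) :
    supply c Pmin Pmax S p = ∑ g ∈ S, Pmin g := by
  unfold supply
  rw [Finset.filter_false_of_mem (fun g _ => by
        exact not_le.mpr (lt_of_lt_of_le hp (hc0 g))),
      Finset.filter_true_of_mem (fun g _ => not_le.mpr (lt_of_lt_of_le hp (hc0 g))),
      Finset.sum_empty, zero_add]

lemma supply_mono_set {G : Type*} (c Pmin Pmax : G → ℝ)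
    (hPmin : ∀ g, 0 ≤ Pmin g) (hPminmax : ∀ g, Pmin g ≤ Pmax g)
    {S S' : Finset G} (hsub : S' ⊆ S) (p : ℝ) :
    supply c Pmin Pmax S' p ≤ supply c Pmin Pmax S p := by
  unfold supply
  refine add_le_add ?_ ?_
  · exact Finset.sum_le_sum_of_subset_of_nonneg (Finset.filter_subset_filter _ hsub)
      (fun g _ _ => le_trans (hPmin g) (hPminmax g))
  · exact Finset.sum_le_sum_of_subset_of_nonneg (Finset.filter_subset_filter _ hsub)
      (fun g _ _ => hPmin g)

/-- Decommitting generators cannot decrease the uncongested market-clearing price: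
if `∑_{g∈S} Pmin_g < D` and `S' ⊆ S`, then `0 ≤ λ_C(S, D) ≤ λ_C(S', D) ≤ C`. -/
theorem decommit_does_not_decrease_price {G : Type*} [Fintype G]
    (c Pmin Pmax : G → ℝ) (C : ℝ) (hC : 0 < C)
    (hPmin : ∀ g, 0 ≤ Pmin g) (hPminmax : ∀ g, Pmin g ≤ Pmax g)
    (hc0 : ∀ g, 0 ≤ c g) (hcC : ∀ g, c g ≤ C)
    (D : ℝ) (hD : 0 < D)
    (S S' : Finset G) (hsub : S' ⊆ S)
    (hmin : ∑ g ∈ S, Pmin g < D) :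
    0 ≤ clearingPrice c Pmin Pmax C S D ∧
    clearingPrice c Pmin Pmax C S D ≤ clearingPrice c Pmin Pmax C S' D ∧
    clearingPrice c Pmin Pmax C S' D ≤ C := by
  have hmin' : ∑ g ∈ S', Pmin g < D :=
    lt_of_le_of_lt (Finset.sum_le_sum_of_subset_of_nonneg hsub (fun g _ _ => hPmin g)) hmin
  -- lower bound 0 on any set of feasible prices for a subset of S
  have hlb : ∀ (T : Finset G), T ⊆ S → ∀ p ∈ {p : ℝ | D ≤ supply c Pmin Pmax T p}, 0 ≤ p := by
    intro T hT p hp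
    by_contra h
    push_neg at h
    rw [Set.mem_setOf_eq, supply_neg c Pmin Pmax hc0 T p h] at hp
    linarith [Finset.sum_le_sum_of_subset_of_nonneg hT (fun g _ _ => hPmin g)]
  have hbdd : ∀ (T : Finset G), T ⊆ S →
      BddBelow {p : ℝ | D ≤ supply c Pmin Pmax T p} :=
    fun T hT => ⟨0, fun p hp => hlb T hT p hp⟩
  -- membership of C in feasible set when total max suffices
  have hmemC : ∀ (T : Finset G), D ≤ ∑ g ∈ T, Pmax g →
      C ∈ {p : ℝ | D ≤ supply c Pmin Pmax T p} := by
    intro T hT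
    rw [Set.mem_setOf_eq, supply_at_cap c Pmin Pmax C hcC]
    exact hT
  have hsumle : ∑ g ∈ S', Pmax g ≤ ∑ g ∈ S, Pmax g :=
    Finset.sum_le_sum_of_subset_of_nonneg hsub
      (fun g _ _ => le_trans (hPmin g) (hPminmax g))
  have hSleC : clearingPrice c Pmin Pmax C S D ≤ C := by
    unfold clearingPrice
    split_ifs with h
    · exact csInf_le (hbdd S (le_refl S)) (hmemC S h)
    · exact le_refl C
  have hS'leC : clearingPrice c Pmin Pmax C S' D ≤ C := by
    unfold clearingPrice
    split_ifs with h
    · exact csInf_le (hbdd S' hsub) (hmemC S' h)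
    · exact le_refl C
  refine ⟨?_, ?_, hS'leC⟩
  · unfold clearingPrice
    split_ifs with h
    · exact le_csInf ⟨C, hmemC S h⟩ (fun p hp => hlb S (le_refl S) p hp)
    · exact le_of_lt hC
  · unfold clearingPrice
    split_ifs with h1 h2 h3 h4
    · -- both feasible: sets are nested
      refine csInf_le_csInf (hbdd S (le_refl S)) ⟨C, hmemC S' h2⟩ ?_
      intro p hp
      exact le_trans hp (supply_mono_set c Pmin Pmax hPmin hPminmax hsub p)
    · exact csInf_le (hbdd S (le_refl S)) (hmemC S h1)
    · exact absurd (le_trans h3 hsumle) h1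
    · exact le_refl C
end

section
/- A price-supported dispatch is cost-optimal (sufficiency of the marginal-price characterization used in the proof of Proposition 1): suppose p : S → ℝ is feasible for demand D and there exists a price λ ∈ ℝ such that p_g = Pmax_g for every g ∈ S with c_g < λ and p_g = Pmin_g for every g ∈ S with c_g > λ. Then p minimizes total generation cost among all feasible dispatches: for every dispatch q : S → ℝ feasible for D, ∑_{g∈S} c_g q_g ≥ ∑_{g∈S} c_g p_g. -/
open Finset

/-- A dispatch `p` is feasible for demand `D` if each generator operates between its
minimum and maximum output and total production equals `D`. -/
def feasibleDispatch {S : Type*} [Fintype S] (Pmin Pmax : S → ℝ) (D : ℝ) (p : S → ℝ) : Prop :=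
  (∀ g, Pmin g ≤ p g ∧ p g ≤ Pmax g) ∧ (∑ g : S, p g) = D

/-- A price-supported dispatch is cost-optimal: if `p` is feasible for demand `D` and
there is a price `λ` such that every generator with cost below `λ` is at its maximum and
every generator with cost above `λ` is at its minimum, then `p` minimizes total
generation cost among all feasible dispatches. -/
theorem price_supported_dispatch_optimal {S : Type*} [Fintype S]
    (c Pmin Pmax : S → ℝ)
    (hPmin : ∀ g, 0 ≤ Pmin g) (hPminmax : ∀ g, Pmin g ≤ Pmax g)
    (D : ℝ) (p : S → ℝ)
    (hp : feasibleDispatch Pmin Pmax D p)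
    (lam : ℝ)
    (hmax : ∀ g, c g < lam → p g = Pmax g)
    (hmin : ∀ g, lam < c g → p g = Pmin g) :
    ∀ q : S → ℝ, feasibleDispatch Pmin Pmax D q →
      ∑ g : S, c g * p g ≤ ∑ g : S, c g * q g := by
  intro q hq
  have key : (0:ℝ) ≤ ∑ g : S, (c g - lam) * (q g - p g) := by
    apply Finset.sum_nonneg
    intro g _
    rcases lt_trichotomy (c g) lam with h | h | h
    · have hq' : q g ≤ Pmax g := (hq.1 g).2
      have : q g - p g ≤ 0 := by rw [hmax g h]; linarith
      nlinarith
    · simp [h]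
    · have hq' : Pmin g ≤ q g := (hq.1 g).1
      have : 0 ≤ q g - p g := by rw [hmin g h]; linarith
      exact mul_nonneg (by linarith) this
  have hsum : ∑ g : S, (c g - lam) * (q g - p g)
      = (∑ g : S, c g * q g) - (∑ g : S, c g * p g)
        - lam * ((∑ g : S, q g) - (∑ g : S, p g)) := by
    simp only [mul_sub, Finset.mul_sum, ← Finset.sum_sub_distrib]
    exact Finset.sum_congr rfl fun g _ => by ring
  rw [hsum, hq.2, hp.2] at key
  linarith
end

section
/- Decommitting generators cannot decrease the total real-time consumer exposure: let T be a finite set of hours with real-time demands d_t > 0 and day-ahead cleared loads D̄_t for t ∈ T, and suppose ∑_{g∈G} Pmin_g < d_t for every t ∈ T. If S'_t ⊆ S_t ⊆ G for every t ∈ T, then ∑_{t∈T} λ_C(S'_t, d_t) · max(d_t − D̄_t, 0) ≥ ∑_{t∈T} λ_C(S_t, d_t) · max(d_t − D̄_t, 0). -/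
open Finset

/-- Decommitting generators cannot decrease the total real-time consumer exposure:
if `S'_t ⊆ S_t` for every hour `t`, then
`∑_t λ_C(S'_t, d_t) · (d_t − D̄_t)⁺ ≥ ∑_t λ_C(S_t, d_t) · (d_t − D̄_t)⁺`. -/
theorem decommit_does_not_decrease_exposure {G T : Type*} [Fintype G] [Fintype T]
    (c Pmin Pmax : G → ℝ) (C : ℝ) (hC : 0 < C)
    (hPmin : ∀ g, 0 ≤ Pmin g) (hPminmax : ∀ g, Pmin g ≤ Pmax g)
    (hc0 : ∀ g, 0 ≤ c g) (hcC : ∀ g, c g ≤ C)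
    (d Dbar : T → ℝ) (hd : ∀ t, 0 < d t)
    (hmin : ∀ t, ∑ g : G, Pmin g < d t)
    (S S' : T → Finset G) (hsub : ∀ t, S' t ⊆ S t) :
    ∑ t : T, clearingPrice c Pmin Pmax C (S' t) (d t) * max (d t - Dbar t) 0 ≥
    ∑ t : T, clearingPrice c Pmin Pmax C (S t) (d t) * max (d t - Dbar t) 0 := by
  have hPmax : ∀ g, 0 ≤ Pmax g := fun g => (hPmin g).trans (hPminmax g)
  -- supply is monotone in the committed set
  have supply_mono : ∀ (A B : Finset G) (p : ℝ), A ⊆ B →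
      supply c Pmin Pmax A p ≤ supply c Pmin Pmax B p := by
    intro A B p hAB
    unfold supply
    refine add_le_add ?_ ?_
    · exact Finset.sum_le_sum_of_subset_of_nonneg (Finset.filter_subset_filter _ hAB)
        (fun g _ _ => hPmax g)
    · exact Finset.sum_le_sum_of_subset_of_nonneg (Finset.filter_subset_filter _ hAB)
        (fun g _ _ => hPmin g)
  -- supply at price C equals total Pmax
  have supply_at_C : ∀ (A : Finset G), supply c Pmin Pmax A C = ∑ g ∈ A, Pmax g := by
    intro A
    unfold supply
    rw [Finset.filter_true_of_mem (fun g _ => hcC g),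
        Finset.filter_false_of_mem (fun g _ => not_not_intro (hcC g)), Finset.sum_empty,
        add_zero]
  refine Finset.sum_le_sum fun t _ => ?_
  have hmax0 : (0:ℝ) ≤ max (d t - Dbar t) 0 := le_max_right _ _
  refine mul_le_mul_of_nonneg_right ?_ hmax0
  -- key: clearingPrice (S t) ≤ clearingPrice (S' t)
  set A := S' t
  set B := S t
  have hAB : A ⊆ B := hsub t
  have hsumAB : ∑ g ∈ A, Pmax g ≤ ∑ g ∈ B, Pmax g :=
    Finset.sum_le_sum_of_subset_of_nonneg hAB (fun g _ _ => hPmax g)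
  -- the set of feasible prices for B is bounded below by 0
  have hbddB : ∀ p ∈ {p : ℝ | d t ≤ supply c Pmin Pmax B p}, (0:ℝ) ≤ p := by
    intro p hp
    by_contra hneg
    push_neg at hneg
    have hfe : B.filter (fun g => c g ≤ p) = ∅ := by
      refine Finset.filter_false_of_mem fun g _ => ?_
      exact not_le.mpr (lt_of_lt_of_le hneg (hc0 g))
    have : supply c Pmin Pmax B p ≤ ∑ g : G, Pmin g := by
      unfold supply
      rw [hfe, Finset.sum_empty, zero_add,
          Finset.filter_true_of_mem (fun g hg => not_le.mpr (lt_of_lt_of_le hneg (hc0 g)))]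
      exact Finset.sum_le_sum_of_subset_of_nonneg (Finset.subset_univ B) (fun g _ _ => hPmin g)
    exact absurd (le_trans hp this) (not_le.mpr (hmin t))
  have hbddBelow : BddBelow {p : ℝ | d t ≤ supply c Pmin Pmax B p} := ⟨0, fun p hp => hbddB p hp⟩
  unfold clearingPrice
  by_cases hA : d t ≤ ∑ g ∈ A, Pmax g
  · have hB : d t ≤ ∑ g ∈ B, Pmax g := hA.trans hsumAB
    rw [if_pos hA, if_pos hB]
    refine csInf_le_csInf hbddBelow ?_ ?_
    · exact ⟨C, by simpa [supply_at_C] using hA⟩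
    · intro p hp
      exact le_trans hp (supply_mono A B p hAB)
  · rw [if_neg hA]
    by_cases hB : d t ≤ ∑ g ∈ B, Pmax g
    · rw [if_pos hB]
      exact csInf_le hbddBelow (by simpa [supply_at_C] using hB)
    · rw [if_neg hB]
end

section
/- Finite termination of the iterative cutting-plane procedure: let F be a finite nonempty set with |F| = N, let h : F → ℝ, and let y_0, y_1, …, y_N ∈ F and h_0, h_1, …, h_{N−1} : F → ℝ be such that for every k ∈ {0, …, N−1}: (i) h_k(y) ≤ h(y) for all y ∈ F (each relaxed master objective underestimates the true objective), (ii) h_k(y_j) = h(y_j) for all j ≤ k (the cuts make the underestimator exact at all previously visited points), and (iii) y_{k+1} minimizes h_k over F. Then there exists k ≤ N such that y_k minimizes h over F. -/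
/-- Finite termination of the iterative cutting-plane procedure: with `|F| = N`,
iterates `y_0, …, y_N` and relaxed objectives `h_0, …, h_{N−1}` such that each `h_k`
underestimates `h`, is exact at all previously visited points `y_0, …, y_k`, and is
minimized by `y_{k+1}`, some iterate `y_k` with `k ≤ N` minimizes the true objective. -/
theorem cutting_plane_finite_termination {F : Type*} [Fintype F] [Nonempty F]
    (N : ℕ) (hcard : Fintype.card F = N)
    (h : F → ℝ) (y : ℕ → F) (hs : ℕ → F → ℝ)
    (hunder : ∀ k < N, ∀ z : F, hs k z ≤ h z)
    (hexact : ∀ k < N, ∀ j ≤ k, hs k (y j) = h (y j))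
    (hmin : ∀ k < N, ∀ z : F, hs k (y (k + 1)) ≤ hs k z) :
    ∃ k ≤ N, ∀ z : F, h (y k) ≤ h z := by
  -- Pigeonhole: y 0, …, y N are N+1 values in a set of size N, so two coincide.
  obtain ⟨i, hi, j, hj, hne, heq⟩ :
      ∃ i ∈ Finset.range (N + 1), ∃ j ∈ Finset.range (N + 1), i ≠ j ∧ y i = y j := by
    have hlt : Fintype.card F < (Finset.range (N + 1)).card := by
      simp [hcard]
    obtain ⟨i, hi, j, hj, hne, heq⟩ :=
      Finset.exists_ne_map_eq_of_card_lt_of_maps_to hlt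
        (fun a _ => Finset.mem_univ (y a))
    exact ⟨i, hi, j, hj, hne, heq⟩
  -- WLOG i < j
  wlog hij : i < j generalizing i j
  · exact this j hj i hi hne.symm heq.symm (hne.lt_or_gt.resolve_left hij)
  simp only [Finset.mem_range] at hi hj
  set k := j - 1 with hk
  have hjk : j = k + 1 := by omega
  have hkN : k < N := by omega
  have hik : i ≤ k := by omega
  refine ⟨j, by omega, fun z => ?_⟩
  calc h (y j) = h (y i) := by rw [heq]
    _ = hs k (y i) := (hexact k hkN i hik).symm
    _ = hs k (y (k + 1)) := by rw [heq, hjk]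
    _ ≤ hs k z := hmin k hkN z
    _ ≤ h z := hunder k hkN z
end
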